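/- Let z be a positive normal float with 1/2 < z < 1 in an IEEE 754 binary format with precision p. Then z ⊗ f_max = z⁻ · 2^{e_max+1} exactly, where z⁻ = z − 2^{−p} is the predecessor of z and f_max = (2 − 2^{1−p})·2^{e_max}. -/

import Mathlib

open scoped Classical

/-- Finite binary floating-point numbers with precision `p` and exponent range
`[emin, emax]` (subnormals included), viewed as real numbers. -/
def FF (p : ℕ) (emin emax : ℤ) : Set ℝ :=
  {x | ∃ m e : ℤ, |m| < 2 ^ p ∧ emin ≤ e ∧ e ≤ emax ∧
        x = (m : ℝ) * (2 : ℝ) ^ (e + 1 - (p : ℤ))}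

/-- Binary floating-point numbers with precision `p` and unbounded exponent. -/
def FInf (p : ℕ) : Set ℝ :=
  {x | ∃ m e : ℤ, |m| < 2 ^ p ∧ x = (m : ℝ) * (2 : ℝ) ^ e}

/-- `z` has an even least-significant significand bit (canonical representation),
format with bounded exponents. -/
def evenFF (p : ℕ) (emin emax : ℤ) (z : ℝ) : Prop :=
  ∃ m e : ℤ, |m| < 2 ^ p ∧ emin ≤ e ∧ e ≤ emax ∧
    z = (m : ℝ) * (2 : ℝ) ^ (e + 1 - (p : ℤ)) ∧ 2 ∣ m ∧
    ((2 : ℤ) ^ (p - 1) ≤ |m| ∨ e = emin)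

/-- `z` has an odd least-significant significand bit (canonical representation). -/
def oddFF (p : ℕ) (emin emax : ℤ) (z : ℝ) : Prop :=
  ∃ m e : ℤ, |m| < 2 ^ p ∧ emin ≤ e ∧ e ≤ emax ∧
    z = (m : ℝ) * (2 : ℝ) ^ (e + 1 - (p : ℤ)) ∧ ¬ 2 ∣ m ∧
    ((2 : ℤ) ^ (p - 1) ≤ |m| ∨ e = emin)

/-- Evenness of the significand for the unbounded-exponent format. -/
def evenInf (p : ℕ) (z : ℝ) : Prop :=
  ∃ m e : ℤ, z = (m : ℝ) * (2 : ℝ) ^ e ∧ 2 ∣ m ∧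
    (((2 : ℤ) ^ (p - 1) ≤ |m| ∧ |m| < 2 ^ p) ∨ m = 0)

/-- `rnd` is round-to-nearest with ties-to-even onto the set `F` of representable
numbers, `even` being the evenness predicate used to break ties. -/
def IsRNE (F : Set ℝ) (even : ℝ → Prop) (rnd : ℝ → ℝ) : Prop :=
  ∀ x : ℝ, rnd x ∈ F ∧ (∀ y ∈ F, |x - rnd x| ≤ |x - y|) ∧
    (∀ y ∈ F, y ≠ rnd x → |x - rnd x| = |x - y| → even (rnd x))

/-- The successor of `x` in the set `F`. -/
noncomputable def succF (F : Set ℝ) (x : ℝ) : ℝ := sInf {y | y ∈ F ∧ x < y}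

/-- The predecessor of `x` in the set `F`. -/
noncomputable def predF (F : Set ℝ) (x : ℝ) : ℝ := sSup {y | y ∈ F ∧ y < x}

/-- The largest finite float, `f_max = (2 - 2^(1-p)) * 2^emax`. -/
noncomputable def fmax (p : ℕ) (emax : ℤ) : ℝ :=
  (2 - (2 : ℝ) ^ (1 - (p : ℤ))) * (2 : ℝ) ^ emax

/-- The smallest positive (subnormal) float, `f_min = 2^(emin+1-p)`. -/
noncomputable def fminF (p : ℕ) (emin : ℤ) : ℝ := (2 : ℝ) ^ (emin + 1 - (p : ℤ))

/-!
Write `z = k·2^(-p)` with `2^(p-1) < k < 2^p`, and let `u = 2^(emax+1-p)` be the spacing of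
the floats in `[2^emax, 2^(emax+1))`. Since `f_max = (1 - 2^(-p))·2^(emax+1)`, the product is
`z·f_max = k·u - z·u`: it lies `(1 - z)·u < u/2` above the float `(k - 1)·u = z⁻·2^(emax+1)`
and `z·u > u/2` below the next float `k·u`, so it rounds to `z⁻·2^(emax+1)` without a tie.
-/

lemma int_mul_add_le_of_lt {s : ℝ} (hs : 0 < s) {a b : ℤ} (h : a * s < b * s) :
    a * s + s ≤ b * s := by
  have hab : (a : ℝ) < b := lt_of_mul_lt_mul_right h hs.le
  have hab : (a : ℝ) + 1 ≤ b := by exact_mod_cast hab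
  nlinarith

section FF

variable {p : ℕ} {emin emax q : ℤ}

lemma exists_eq_int_mul_zpow_of_mem_FF {x : ℝ} (hx : x ∈ FF p emin emax)
    (hq : (2 : ℝ) ^ q ≤ |x|) : ∃ n : ℤ, x = n * (2 : ℝ) ^ (q + 1 - p) := by
  obtain ⟨m, e, hm, -, -, rfl⟩ := hx
  have hqe : q ≤ e := by
    by_contra! h
    have : |(m : ℝ) * 2 ^ (e + 1 - (p : ℤ))| < 2 ^ q := calc
      _ = |(m : ℝ)| * 2 ^ (e + 1 - (p : ℤ)) := by rw [abs_mul, abs_zpow, abs_two]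
      _ < 2 ^ p * 2 ^ (e + 1 - (p : ℤ)) := by gcongr; exact_mod_cast hm
      _ = 2 ^ (e + 1) := by rw [← zpow_natCast, ← zpow_add₀ two_ne_zero]; ring_nf
      _ ≤ 2 ^ q := zpow_le_zpow_right₀ one_le_two (by omega)
    linarith
  refine ⟨m * 2 ^ (e - q).toNat, ?_⟩
  push_cast
  rw [mul_assoc, ← zpow_natCast, Int.toNat_of_nonneg (by omega), ← zpow_add₀ two_ne_zero]
  ring_nf

lemma int_mul_zpow_mem_FF {e n : ℤ} (he : emin ≤ e) (he' : e ≤ emax) (hn : 0 ≤ n)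
    (hlt : (n : ℝ) * 2 ^ (e + 1 - p) < 2 ^ (e + 1)) :
    (n : ℝ) * 2 ^ (e + 1 - p) ∈ FF p emin emax := by
  refine ⟨n, e, ?_, he, he', rfl⟩
  rw [show (2 : ℝ) ^ (e + 1) = 2 ^ p * 2 ^ (e + 1 - p) by
    rw [← zpow_natCast, ← zpow_add₀ two_ne_zero]; ring_nf] at hlt
  rw [abs_of_nonneg hn]
  exact_mod_cast lt_of_mul_lt_mul_right hlt (by positivity)

lemma zpow_mem_FF (hp : 1 ≤ p) (hq : emin ≤ q) (hq' : q ≤ emax) :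
    (2 : ℝ) ^ q ∈ FF p emin emax := by
  have h : (2 : ℝ) ^ q = ((2 ^ (p - 1) : ℤ) : ℝ) * 2 ^ (q + 1 - p) := by
    push_cast
    rw [← zpow_natCast, ← zpow_add₀ two_ne_zero]
    congr 1
    omega
  rw [h]
  refine int_mul_zpow_mem_FF hq hq' (by positivity) ?_
  rw [← h]
  exact zpow_lt_zpow_right₀ one_lt_two (by omega)

lemma zpow_mul_mem_FF {x : ℝ} {k : ℤ} (hx : x ∈ FF p emin emax) (h1 : (2 : ℝ) ^ q ≤ x)
    (h2 : x < 2 ^ (q + 1)) (hk : emin ≤ q + k) (hk' : q + k ≤ emax) :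
    x * 2 ^ k ∈ FF p emin emax := by
  obtain ⟨n, rfl⟩ := exists_eq_int_mul_zpow_of_mem_FF hx (h1.trans (le_abs_self _))
  have hs : (0 : ℝ) < 2 ^ (q + 1 - p) := by positivity
  have hn : (0 : ℝ) ≤ n := nonneg_of_mul_nonneg_left ((zpow_pos two_pos q).le.trans h1) hs
  have hscale : (n : ℝ) * 2 ^ (q + 1 - p) * 2 ^ k = n * 2 ^ (q + k + 1 - p) := by
    rw [mul_assoc, ← zpow_add₀ two_ne_zero]; ring_nf
  have hscale' : (2 : ℝ) ^ (q + 1) * 2 ^ k = 2 ^ (q + k + 1) := by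
    rw [← zpow_add₀ two_ne_zero]; ring_nf
  rw [hscale]
  refine int_mul_zpow_mem_FF hk hk' (by exact_mod_cast hn) ?_
  rw [← hscale, ← hscale']
  gcongr

lemma add_zpow_le_of_mem_FF_of_lt {x y : ℝ} (hx : x ∈ FF p emin emax)
    (hy : y ∈ FF p emin emax) (hq : (2 : ℝ) ^ q ≤ x) (hxy : x < y) :
    x + 2 ^ (q + 1 - p) ≤ y := by
  obtain ⟨a, rfl⟩ := exists_eq_int_mul_zpow_of_mem_FF hx (hq.trans (le_abs_self _))
  obtain ⟨b, rfl⟩ :=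
    exists_eq_int_mul_zpow_of_mem_FF hy (hq.trans (hxy.le.trans (le_abs_self _)))
  exact int_mul_add_le_of_lt (by positivity) hxy

lemma zpow_add_zpow_le_of_mem_FF {z : ℝ} (hp : 1 ≤ p) (hq : emin ≤ q) (hq' : q ≤ emax)
    (hz : z ∈ FF p emin emax) (h1 : 2 ^ q < z) :
    (2 : ℝ) ^ q + 2 ^ (q + 1 - p) ≤ z :=
  add_zpow_le_of_mem_FF_of_lt (zpow_mem_FF hp hq hq') hz le_rfl h1

lemma sub_zpow_mem_FF {z : ℝ} (hp : 1 ≤ p) (hq : emin ≤ q) (hq' : q ≤ emax)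
    (hz : z ∈ FF p emin emax) (h1 : 2 ^ q < z) (h2 : z ≤ 2 ^ (q + 1)) :
    z - 2 ^ (q + 1 - p) ∈ FF p emin emax := by
  have hw : (2 : ℝ) ^ q ≤ z - 2 ^ (q + 1 - p) := by
    linarith [zpow_add_zpow_le_of_mem_FF hp hq hq' hz h1]
  obtain ⟨n, rfl⟩ := exists_eq_int_mul_zpow_of_mem_FF hz (h1.le.trans (le_abs_self _))
  have hs : (0 : ℝ) < 2 ^ (q + 1 - p) := by positivity
  have hsub : (n : ℝ) * 2 ^ (q + 1 - p) - 2 ^ (q + 1 - p) =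
      ((n - 1 : ℤ) : ℝ) * 2 ^ (q + 1 - p) := by
    push_cast; ring
  rw [hsub] at hw ⊢
  refine int_mul_zpow_mem_FF hq hq' ?_ (by linarith)
  have : (0 : ℝ) ≤ ((n - 1 : ℤ) : ℝ) :=
    nonneg_of_mul_nonneg_left ((zpow_pos two_pos q).le.trans hw) hs
  exact_mod_cast this

theorem predF_FF_eq_sub {z : ℝ} (hp : 1 ≤ p) (hq : emin ≤ q) (hq' : q ≤ emax)
    (hz : z ∈ FF p emin emax) (h1 : 2 ^ q < z) (h2 : z ≤ 2 ^ (q + 1)) :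
    predF (FF p emin emax) z = z - 2 ^ (q + 1 - p) := by
  have hwF := sub_zpow_mem_FF hp hq hq' hz h1 h2
  have hw : (2 : ℝ) ^ q ≤ z - 2 ^ (q + 1 - p) := by
    linarith [zpow_add_zpow_le_of_mem_FF hp hq hq' hz h1]
  have hs : (0 : ℝ) < 2 ^ (q + 1 - p) := by positivity
  refine IsGreatest.csSup_eq ⟨⟨hwF, by linarith⟩, fun y ⟨hy, hyz⟩ => ?_⟩
  by_contra! h
  linarith [add_zpow_le_of_mem_FF_of_lt hwF hy hw h]

end FF

lemma IsRNE.eq_of_lt_add_half {F : Set ℝ} {even : ℝ → Prop} {rnd : ℝ → ℝ}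
    (hrnd : IsRNE F even rnd) {x t u : ℝ} (ht : t ∈ F)
    (hgap : ∀ y ∈ F, t < y → t + u ≤ y) (htx : t ≤ x) (hxu : x < t + u / 2) : rnd x = t := by
  obtain ⟨hrF, hnear, -⟩ := hrnd x
  have hclose := hnear t ht
  by_contra hne
  rcases lt_or_gt_of_ne hne with hlt | hgt
  · rw [abs_of_nonneg (by linarith), abs_of_nonneg (by linarith)] at hclose
    linarith
  · have := hgap _ hrF hgt
    rw [abs_of_nonpos (by linarith), abs_of_nonneg (by linarith)] at hclose
    linarith

lemma fmax_eq (p : ℕ) (emax : ℤ) :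
    fmax p emax = (1 - (2 : ℝ) ^ (-(p : ℤ))) * 2 ^ (emax + 1) := by
  rw [fmax, show (1 : ℤ) - p = -p + 1 by ring, zpow_add_one₀ two_ne_zero,
    zpow_add_one₀ two_ne_zero]
  ring

/-- For a float `z` with `1/2 < z < 1`, `z ⊗ f_max = z⁻ · 2^(emax+1)` exactly,
where `z⁻ = z - 2^(-p)`. -/
theorem mul_fmax_half_one (p : ℕ) (hp : 2 ≤ p) (emin emax : ℤ)
    (hemin : emin ≤ -1) (hemax : 0 ≤ emax)
    (rnd : ℝ → ℝ)
    (hrnd : IsRNE (FF p emin emax) (evenFF p emin emax) rnd)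
    (z : ℝ) (hz : z ∈ FF p emin emax)
    (h1 : 1 / 2 < z) (h2 : z < 1) :
    rnd (z * fmax p emax) = predF (FF p emin emax) z * (2 : ℝ) ^ (emax + 1) ∧
      predF (FF p emin emax) z = z - (2 : ℝ) ^ (-(p : ℤ)) := by
  have hp1 : 1 ≤ p := by omega
  have h1' : (2 : ℝ) ^ (-1 : ℤ) < z := by norm_num; linarith
  have h2' : z ≤ (2 : ℝ) ^ ((-1 : ℤ) + 1) := by norm_num; linarith
  have hpred := predF_FF_eq_sub hp1 hemin (by omega) hz h1' h2'
  have hwF := sub_zpow_mem_FF hp1 hemin (by omega) hz h1' h2'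
  have hw := zpow_add_zpow_le_of_mem_FF hp1 hemin (by omega) hz h1'
  rw [show (-1 : ℤ) + 1 - p = -p by ring] at hpred hwF hw
  refine ⟨?_, hpred⟩
  rw [hpred, fmax_eq]
  set s : ℝ := 2 ^ (-(p : ℤ))
  set U : ℝ := 2 ^ (emax + 1)
  have hs : 0 < s := by positivity
  have htF : (z - s) * U ∈ FF p emin emax :=
    zpow_mul_mem_FF (q := -1) hwF (by linarith) (by norm_num; linarith) (by omega)
      (by omega)
  have htop : (2 : ℝ) ^ emax ≤ (z - s) * U := by
    rw [show (2 : ℝ) ^ emax = 2 ^ (-1 : ℤ) * U by rw [← zpow_add₀ two_ne_zero]; ring_nf]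
    gcongr
    linarith
  have hu : (2 : ℝ) ^ (emax + 1 - p) = s * U := by rw [← zpow_add₀ two_ne_zero]; ring_nf
  have hsU : 0 < s * U := by positivity
  have hdist : z * ((1 - s) * U) - (z - s) * U = (1 - z) * (s * U) := by ring
  refine hrnd.eq_of_lt_add_half (u := s * U) htF (fun y hy hty => ?_) ?_ ?_
  · exact hu ▸ add_zpow_le_of_mem_FF_of_lt htF hy htop hty
  · nlinarith
  · nlinarith
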